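/- Let P be a set of n collinear points in ℝ² (all lying on a common line, n ≥ 1). Then the minimum number of disks needed to identify P is exactly ⌈(n+1)/2⌉. -/

import Mathlib

noncomputable section

/-- The Euclidean plane. -/
abbrev Pt : Type := EuclideanSpace ℝ (Fin 2)

/-- A disk: a closed Euclidean ball with nonnegative radius. -/
def IsDisk (D : Set Pt) : Prop :=
  ∃ (c : Pt) (r : ℝ), 0 ≤ r ∧ D = Metric.closedBall c r

/-- A family of disks identifies a finite point set: every point is covered and
every pair of distinct points is separated by some disk. -/
def Identifies (𝒟 : Finset (Set Pt)) (P : Finset Pt) : Prop :=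
  (∀ p ∈ P, ∃ D ∈ 𝒟, p ∈ D) ∧
  (∀ p ∈ P, ∀ q ∈ P, p ≠ q → ∃ D ∈ 𝒟, (p ∈ D ∧ q ∉ D) ∨ (q ∈ D ∧ p ∉ D))

/-- Minimum number of disks needed to identify `P`. -/
def gammaID (P : Finset Pt) : ℕ :=
  sInf {k | ∃ 𝒟 : Finset (Set Pt), 𝒟.card = k ∧ (∀ D ∈ 𝒟, IsDisk D) ∧ Identifies 𝒟 P}

/-!
Parametrise the line through `P` by `t ↦ lineMap p q t`. Pulled back to the parameter line,
every disk becomes an interval, and an interval meets the points `x₀ < ⋯ < x_{n-1}` in a run of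
consecutive ones. Lower bound: each of the `n + 1` gaps (before `x₀`, between consecutive points,
after `x_{n-1}`) must be crossed by the boundary of some disk, and an interval crosses at most two
gaps. Upper bound: with `k = ⌊n/2⌋ + 1`, the `k` windows `{xᵢ, …, x_{i+k-1}}` for `i < k` identify
the points, and each window is cut out by a disk.
-/

open Finset Function

section Identification

variable {ι α β : Type*}

def IdentifiesBy (I : Finset ι) (D : ι → Set α) (s : Finset α) : Prop :=
  (∀ x ∈ s, ∃ i ∈ I, x ∈ D i) ∧ ∀ x ∈ s, ∀ y ∈ s, x ≠ y → ∃ i ∈ I, Xor (x ∈ D i) (y ∈ D i)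

theorem identifies_image_iff [DecidableEq (Set Pt)] (I : Finset ι) (D : ι → Set Pt)
    (P : Finset Pt) : Identifies (I.image D) P ↔ IdentifiesBy I D P := by
  simp [Identifies, IdentifiesBy, xor_def]

theorem identifiesBy_image_iff [DecidableEq β] {I : Finset ι} {D : ι → Set β} {f : α → β}
    (hf : Injective f) {s : Finset α} :
    IdentifiesBy I D (s.image f) ↔ IdentifiesBy I (fun i => f ⁻¹' D i) s := by
  simp [IdentifiesBy, hf.ne_iff]

theorem Set.OrdConnected.subsingleton_setOf_notMem_succ_mem {S : Set ℕ} (hS : S.OrdConnected) :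
    {j | j ∉ S ∧ j + 1 ∈ S}.Subsingleton := by
  intro j ⟨hj, hj1⟩ j' ⟨hj', hj'1⟩
  by_contra hne
  rcases Ne.lt_or_gt hne with h | h
  · exact hj' (hS.out hj1 hj'1 ⟨h, j'.le_succ⟩)
  · exact hj (hS.out hj'1 hj1 ⟨h, j.le_succ⟩)

theorem Set.OrdConnected.subsingleton_setOf_mem_succ_notMem {S : Set ℕ} (hS : S.OrdConnected) :
    {j | j ∈ S ∧ j + 1 ∉ S}.Subsingleton := by
  intro j ⟨hj, hj1⟩ j' ⟨hj', hj'1⟩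
  by_contra hne
  rcases Ne.lt_or_gt hne with h | h
  · exact hj1 (hS.out hj hj' ⟨j.le_succ, h⟩)
  · exact hj'1 (hS.out hj' hj ⟨j'.le_succ, h⟩)

theorem Set.OrdConnected.card_filter_xor_le_two {S : Set ℕ} [DecidablePred (· ∈ S)]
    (hS : S.OrdConnected) (J : Finset ℕ) :
    #{j ∈ J | Xor (j ∈ S) (j + 1 ∈ S)} ≤ 2 := by
  have hsub : {j ∈ J | Xor (j ∈ S) (j + 1 ∈ S)} ⊆
      {j ∈ J | j ∉ S ∧ j + 1 ∈ S} ∪ {j ∈ J | j ∈ S ∧ j + 1 ∉ S} := by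
    intro j
    simp only [Finset.mem_filter, Finset.mem_union, xor_def]
    tauto
  have hentry : #{j ∈ J | j ∉ S ∧ j + 1 ∈ S} ≤ 1 := card_le_one.mpr fun a ha b hb =>
    hS.subsingleton_setOf_notMem_succ_mem (mem_filter.mp ha).2 (mem_filter.mp hb).2
  have hexit : #{j ∈ J | j ∈ S ∧ j + 1 ∉ S} ≤ 1 := card_le_one.mpr fun a ha b hb =>
    hS.subsingleton_setOf_mem_succ_notMem (mem_filter.mp ha).2 (mem_filter.mp hb).2
  exact (Finset.card_le_card hsub).trans ((Finset.card_union_le _ _).trans (add_le_add hentry hexit))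

theorem card_le_two_mul_of_forall_xor {I : Finset ι} {S : ι → Set ℕ}
    (hS : ∀ i ∈ I, (S i).OrdConnected) {N : ℕ}
    (hcross : ∀ j < N, ∃ i ∈ I, Xor (j ∈ S i) (j + 1 ∈ S i)) : N ≤ 2 * #I := by
  classical
  have := card_mul_le_card_mul (s := range N) (t := I) (m := 1) (n := 2)
    (fun j i => Xor (j ∈ S i) (j + 1 ∈ S i))
    (fun j hj => card_pos.mpr <| by
      obtain ⟨i, hi, hx⟩ := hcross j (mem_range.mp hj)
      exact ⟨i, mem_filter.mpr ⟨hi, hx⟩⟩)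
    (fun i hi => (hS i hi).card_filter_xor_le_two _)
  simpa [mul_comm] using this

theorem IdentifiesBy.card_add_one_le [LinearOrder α] {I : Finset ι}
    {D : ι → Set α} {s : Finset α} (h : IdentifiesBy I D s) (hs : s.Nonempty)
    (hD : ∀ i ∈ I, (D i).OrdConnected) : #s + 1 ≤ 2 * #I := by
  set n := #s
  set e := s.orderEmbOfFin rfl
  -- the point `e j` sits at position `j + 1`, so gap `j` lies between positions `j` and `j + 1`
  set S : ι → Set ℕ := fun i => {k | ∃ j : Fin n, (j : ℕ) + 1 = k ∧ e j ∈ D i}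
  have mem_S (i : ι) (j : Fin n) : (j : ℕ) + 1 ∈ S i ↔ e j ∈ D i := by
    simp [S, Fin.val_inj]
  refine card_le_two_mul_of_forall_xor (S := S) (fun i hi => ⟨?_⟩) (fun j hj => ?_)
  · rintro _ ⟨a, rfl, ha⟩ _ ⟨b, rfl, hb⟩ k ⟨hak, hkb⟩
    obtain ⟨c, rfl⟩ : ∃ c : Fin n, (c : ℕ) + 1 = k := ⟨⟨k - 1, by omega⟩, by dsimp only; omega⟩
    refine (mem_S i c).mpr ((hD i hi).out ha hb ⟨?_, ?_⟩) <;>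
      exact e.monotone (Fin.mk_le_mk.mpr (by omega))
  · have notMem_S (i : ι) {k : ℕ} (hk : k = 0 ∨ n < k) : k ∉ S i := by
      rintro ⟨j, rfl, -⟩
      omega
    have he (j : Fin n) : e j ∈ s := s.orderEmbOfFin_mem rfl j
    cases j with
    | zero =>
      obtain ⟨i, hi, hmem⟩ := h.1 _ (he ⟨0, hs.card_pos⟩)
      exact ⟨i, hi, Or.inr ⟨(mem_S i _).mpr hmem, notMem_S i (Or.inl rfl)⟩⟩
    | succ j =>
      rcases (show j + 1 < n ∨ j + 1 = n by omega) with hjn | hjn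
      · obtain ⟨i, hi, hsep⟩ := h.2 _ (he ⟨j, by omega⟩) _ (he ⟨j + 1, hjn⟩)
          (e.injective.ne (by simp))
        exact ⟨i, hi, by rwa [← mem_S, ← mem_S] at hsep⟩
      · obtain ⟨i, hi, hmem⟩ := h.1 _ (he ⟨j, by omega⟩)
        exact ⟨i, hi, Or.inl ⟨(mem_S i _).mpr hmem, notMem_S i (Or.inr (by omega))⟩⟩

theorem exists_lt_mem_Ico {k a : ℕ} (ha : a + 1 < 2 * k) : ∃ i < k, a ∈ Set.Ico i (i + k) :=
  ⟨a + 1 - k, by omega, by simp only [Set.mem_Ico]; omega⟩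

theorem exists_lt_xor_mem_Ico {k a b : ℕ} (hab : a ≠ b) (ha : a + 1 < 2 * k)
    (hb : b + 1 < 2 * k) : ∃ i < k, Xor (a ∈ Set.Ico i (i + k)) (b ∈ Set.Ico i (i + k)) := by
  wlog hlt : a < b generalizing a b
  · obtain ⟨i, hi, hx⟩ := this hab.symm hb ha (by omega)
    exact ⟨i, hi, xor_comm _ _ ▸ hx⟩
  simp only [Set.mem_Ico, xor_def]
  by_cases hak : a + 1 < k
  · exact ⟨max (a + 1) (b + 1 - k), by omega, by omega⟩
  · exact ⟨a + 1 - k, by omega, by omega⟩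

theorem exists_identifiesBy_Icc [LinearOrder α] {s : Finset α} (hs : s.Nonempty) :
    ∃ a b : ℕ → α, (∀ i, a i ≤ b i) ∧
      IdentifiesBy (range ((#s + 2) / 2)) (fun i => Set.Icc (a i) (b i)) s := by
  set n := #s
  set k := (n + 2) / 2
  set e := s.orderEmbOfFin rfl
  have hn : 0 < n := hs.card_pos
  have he (x : α) (hx : x ∈ s) : ∃ j, e j = x := by
    rwa [← Set.mem_range, s.range_orderEmbOfFin rfl]
  set pt : ℕ → α := fun j => e ⟨min j (n - 1), by omega⟩
  have mem_window (i : ℕ) (hi : i < k) (j : Fin n) :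
      e j ∈ Set.Icc (pt i) (pt (i + k - 1)) ↔ (j : ℕ) ∈ Set.Ico i (i + k) := by
    simp only [pt, Set.mem_Icc, Set.mem_Ico, e.le_iff_le, Fin.le_def]
    omega
  refine ⟨pt, fun i => pt (i + k - 1), fun i => e.monotone (Fin.mk_le_mk.mpr (by omega)), ?_, ?_⟩
  · intro x hx
    obtain ⟨j, rfl⟩ := he x hx
    obtain ⟨i, hi, hj⟩ := exists_lt_mem_Ico (k := k) (a := j) (by omega)
    exact ⟨i, mem_range.mpr hi, (mem_window i hi j).mpr hj⟩
  · intro x hx y hy hxy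
    obtain ⟨j, rfl⟩ := he x hx
    obtain ⟨j', rfl⟩ := he y hy
    obtain ⟨i, hi, hsep⟩ := exists_lt_xor_mem_Ico (k := k)
      (Fin.val_injective.ne (e.injective.ne_iff.mp hxy)) (by omega) (by omega)
    exact ⟨i, mem_range.mpr hi, by rwa [mem_window i hi, mem_window i hi]⟩

end Identification

theorem Collinear.exists_image_lineMap_eq {k V P : Type*} [Field k] [AddCommGroup V]
    [Module k V] [AddTorsor V P] [Nontrivial V] [DecidableEq P] {s : Finset P}
    (h : Collinear k (s : Set P)) :
    ∃ p q : P, p ≠ q ∧ ∃ T : Finset k, T.image (AffineMap.lineMap p q) = s := by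
  obtain ⟨p, v, hv⟩ := (collinear_iff_exists_forall_eq_smul_vadd _).mp h
  obtain ⟨w, hw, hsub⟩ : ∃ w : V, w ≠ 0 ∧ ∀ x ∈ s, ∃ r : k, r • w +ᵥ p = x := by
    rcases eq_or_ne v 0 with rfl | hv0
    · obtain ⟨w, hw⟩ := exists_ne (0 : V)
      refine ⟨w, hw, fun x hx => ⟨0, ?_⟩⟩
      obtain ⟨r, rfl⟩ := hv x hx
      simp
    · exact ⟨v, hv0, fun x hx => (hv x hx).imp fun r hr => hr.symm⟩
  refine ⟨p, w +ᵥ p, by rw [ne_eq, eq_vadd_iff_vsub_eq, vsub_self]; exact hw.symm, ?_⟩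
  have hrange : (s : Set P) ⊆ AffineMap.lineMap p (w +ᵥ p) '' Set.univ := fun x hx => by
    simpa [AffineMap.lineMap_apply] using hsub x hx
  obtain ⟨T, -, hT⟩ := Finset.subset_set_image_iff.mp hrange
  exact ⟨T, hT⟩

theorem preimage_lineMap_closedBall {V P : Type*} [NormedAddCommGroup V] [NormedSpace ℝ V]
    [MetricSpace P] [NormedAddTorsor V P] {p q : P} (hpq : p ≠ q) (c r : ℝ) :
    AffineMap.lineMap p q ⁻¹' Metric.closedBall (AffineMap.lineMap p q c) (dist p q * r) =
      Metric.closedBall c r := by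
  ext t
  rw [Set.mem_preimage, Metric.mem_closedBall, Metric.mem_closedBall, dist_lineMap_lineMap,
    mul_comm (dist p q)]
  exact mul_le_mul_iff_left₀ (dist_pos.mpr hpq)

theorem gammaID_eq {P : Finset Pt} {m : ℕ}
    (hle : ∃ 𝒟 : Finset (Set Pt), #𝒟 ≤ m ∧ (∀ D ∈ 𝒟, IsDisk D) ∧ Identifies 𝒟 P)
    (hge : ∀ 𝒟 : Finset (Set Pt), (∀ D ∈ 𝒟, IsDisk D) → Identifies 𝒟 P → m ≤ #𝒟) :
    gammaID P = m := by
  obtain ⟨𝒟, hcard, hdisk, hid⟩ := hle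
  unfold gammaID
  refine le_antisymm (le_trans (Nat.sInf_le ⟨𝒟, rfl, hdisk, hid⟩) hcard) ?_
  refine le_csInf ⟨_, 𝒟, rfl, hdisk, hid⟩ ?_
  rintro _ ⟨𝒟', rfl, hdisk', hid'⟩
  exact hge 𝒟' hdisk' hid'

theorem gammaID_collinear (P : Finset Pt) (hn : 1 ≤ P.card)
    (hcol : Collinear ℝ (P : Set Pt)) :
    gammaID P = (P.card + 2) / 2 := by
  classical
  obtain ⟨p, q, hpq, T, rfl⟩ := hcol.exists_image_lineMap_eq
  set L : ℝ →ᵃ[ℝ] Pt := AffineMap.lineMap p q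
  have hL : Injective L := AffineMap.lineMap_injective ℝ hpq
  rw [card_image_of_injective _ hL] at hn ⊢
  have hT : T.Nonempty := card_pos.mp hn
  apply gammaID_eq
  · obtain ⟨a, b, hab, hid⟩ := exists_identifiesBy_Icc hT
    refine ⟨(range _).image fun i =>
        Metric.closedBall (L ((a i + b i) / 2)) (dist p q * ((b i - a i) / 2)),
      card_image_le.trans (card_range _).le, ?_, ?_⟩
    · exact forall_mem_image.mpr fun i _ =>
        ⟨_, _, mul_nonneg dist_nonneg (by linarith [hab i]), rfl⟩
    · rw [identifies_image_iff, identifiesBy_image_iff hL]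
      simpa only [L, preimage_lineMap_closedBall hpq, ← Real.Icc_eq_closedBall] using hid
  · intro 𝒟 hdisk hid
    rw [← image_id (s := 𝒟), identifies_image_iff, identifiesBy_image_iff hL] at hid
    have := hid.card_add_one_le hT fun D hD => by
      obtain ⟨c, r, -, rfl⟩ := hdisk D hD
      exact ((convex_closedBall c r).affine_preimage L).ordConnected
    omega
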